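/- Let G be an irreducible graph-directed matrix product system with irreducibility family H. Then there exist constants A, B > 0 such that for any finite paths η₁, η₂ ∈ Σ*, there exists some γ ∈ H such that η₁γη₂ is a path and A·‖T(η₁)‖·‖T(η₂)‖ ≤ ‖T(η₁γη₂)‖ ≤ B·‖T(η₁)‖·‖T(η₂)‖. -/

import Mathlib

open Filter Topology

/-- A graph-directed matrix product system: a finite directed graph (multiple
edges allowed) with a dimension for each vertex, a non-negative transition
matrix for each edge (encoded as a block of a big matrix indexed by
`(v : V) × Fin (dim v)`, supported on the `(src e, tgt e)` block), and a
weight `W e ∈ (0,1)` for each edge. -/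
structure GMPS where
  V : Type
  E : Type
  [fintV : Fintype V]
  [decV : DecidableEq V]
  [fintE : Fintype E]
  [decE : DecidableEq E]
  src : E → V
  tgt : E → V
  dim : V → ℕ
  dim_pos : ∀ v, 0 < dim v
  T : E → Matrix ((v : V) × Fin (dim v)) ((v : V) × Fin (dim v)) ℝ
  T_nonneg : ∀ e i j, 0 ≤ T e i j
  T_block : ∀ e i j, T e i j ≠ 0 → i.1 = src e ∧ j.1 = tgt e
  W : E → ℝ
  W_pos : ∀ e, 0 < W e
  W_lt_one : ∀ e, W e < 1

attribute [instance] GMPS.fintV GMPS.decV GMPS.fintE GMPS.decE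

namespace GMPS

variable (G : GMPS)

/-- The global index type for the block matrices. -/
abbrev Idx := (v : G.V) × Fin (G.dim v)

/-- A finite sequence of edges is a path when consecutive edges are compatible. -/
def IsPath (l : List G.E) : Prop := l.Chain' fun e e' => G.tgt e = G.src e'

/-- A (nonempty) path starts at the source of its first edge. -/
def startsAt (l : List G.E) (v : G.V) : Prop := ∃ e, l.head? = some e ∧ G.src e = v

/-- A (nonempty) path ends at the target of its last edge. -/
def endsAt (l : List G.E) (v : G.V) : Prop := ∃ e, l.getLast? = some e ∧ G.tgt e = v

/-- `l` is a (nonempty) path from `v₁` to `v₂`. -/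
def PathFrom (l : List G.E) (v₁ v₂ : G.V) : Prop :=
  G.IsPath l ∧ G.startsAt l v₁ ∧ G.endsAt l v₂

/-- The underlying graph is strongly connected. -/
def StronglyConnected : Prop := ∀ v₁ v₂ : G.V, ∃ l, G.PathFrom l v₁ v₂

/-- The product `T(e₁) ⋯ T(eₙ)` of the transition matrices along a path. -/
noncomputable def Tp (l : List G.E) : Matrix G.Idx G.Idx ℝ := (l.map G.T).prod

/-- The product `W(e₁) ⋯ W(eₙ)` of the weights along a path. -/
def Wp (l : List G.E) : ℝ := (l.map G.W).prod

/-- The norm of a matrix: the sum of its entries. -/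
noncomputable def mnorm (M : Matrix G.Idx G.Idx ℝ) : ℝ := ∑ i, ∑ j, M i j

/-- `Σ_t`: the paths `η` with `W(η) < t ≤ W(η⁻)` and `‖T(η)‖ > 0`. -/
def SigmaT (t : ℝ) : Set (List G.E) :=
  {l | G.IsPath l ∧ l ≠ [] ∧ G.Wp l < t ∧ t ≤ G.Wp l.dropLast ∧ 0 < G.mnorm (G.Tp l)}

/-- `H` is an irreducibility family: for all vertices `v₁, v₂` and all indices
`i ≤ d(v₁)`, `j ≤ d(v₂)` there is `γ ∈ H` from `v₁` to `v₂` with `T(γ)_{i,j} > 0`. -/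
def IrredFamily (H : Finset (List G.E)) : Prop :=
  ∀ (v₁ v₂ : G.V) (i : Fin (G.dim v₁)) (j : Fin (G.dim v₂)),
    ∃ γ ∈ H, G.PathFrom γ v₁ v₂ ∧ 0 < G.Tp γ ⟨v₁, i⟩ ⟨v₂, j⟩

/-- The matrix product system is irreducible. -/
def Irreducible : Prop := ∃ H : Finset (List G.E), G.IrredFamily H

/-- An infinite path in the graph. -/
def IsInfPath (γ : ℕ → G.E) : Prop := ∀ n, G.tgt (γ n) = G.src (γ (n + 1))

/-- The prefix `γ|n` of an infinite path. -/
def pfx (γ : ℕ → G.E) (n : ℕ) : List G.E := (List.range n).map γ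

/-- The quotient `log ‖T(γ|n)‖ / log W(γ|n)` whose `liminf`/`limsup`/limit are
the lower/upper Lyapunov exponent and Lyapunov exponent of `γ`. -/
noncomputable def lyapQ (γ : ℕ → G.E) (n : ℕ) : ℝ :=
  Real.log (G.mnorm (G.Tp (G.pfx γ n))) / Real.log (G.Wp (G.pfx γ n))

/-- `min_{η ∈ Σ_t} log ‖T(η)‖ / log t`. -/
noncomputable def minQ (t : ℝ) : ℝ :=
  sInf ((fun l => Real.log (G.mnorm (G.Tp l)) / Real.log t) '' G.SigmaT t)

/-- `max_{η ∈ Σ_t} log ‖T(η)‖ / log t`. -/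
noncomputable def maxQ (t : ℝ) : ℝ :=
  sSup ((fun l => Real.log (G.mnorm (G.Tp l)) / Real.log t) '' G.SigmaT t)

/-- The spectral radius of a (non-negative) square matrix. -/
noncomputable def spr (M : Matrix G.Idx G.Idx ℝ) : ℝ := (spectralRadius ℝ M).toReal

end GMPS

/-!
All matrices are non-negative, so `‖·‖` is submultiplicative; together with a bound `B` on
`‖T(γ)‖` over the finite family `H` this gives the upper estimate. For the lower one, the largest
entry of `T(η₁)` is at least `‖T(η₁)‖ / K²` (`K` the total dimension) and sits in a column of the
block of the endpoint of `η₁`; symmetrically for `T(η₂)` and the block of its starting point.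
Irreducibility gives `γ ∈ H` whose matrix links exactly that column to that row with an entry at
least `c`, a positive lower bound for the positive entries of the `T(γ)`, `γ ∈ H`; the single
corresponding term of the triple product bounds `‖T(η₁γη₂)‖` from below.
-/

namespace Matrix

variable {ι κ μ : Type*}

theorem apply_mul_apply_le_mul_apply [Fintype κ] {M : Matrix ι κ ℝ} {N : Matrix κ μ ℝ}
    (hM : ∀ i k, 0 ≤ M i k) (hN : ∀ k j, 0 ≤ N k j) (i : ι) (k : κ) (j : μ) : M i k * N k j ≤ (M * N) i j :=
  Finset.single_le_sum (f := fun k => M i k * N k j)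
    (fun k _ => mul_nonneg (hM i k) (hN k j)) (Finset.mem_univ k)

theorem apply_le_sum_sum [Fintype ι] [Fintype κ] {M : Matrix ι κ ℝ} (hM : ∀ i k, 0 ≤ M i k)
    (i : ι) (k : κ) :
    M i k ≤ ∑ i, ∑ k, M i k :=
  calc M i k ≤ ∑ k, M i k := Finset.single_le_sum (fun k _ => hM i k) (Finset.mem_univ k)
    _ ≤ ∑ i, ∑ k, M i k :=
      Finset.single_le_sum (fun i _ => Finset.sum_nonneg fun k _ => hM i k) (Finset.mem_univ i)

theorem sum_sum_mul_le [Fintype ι] [Fintype κ] [Fintype μ] {M : Matrix ι κ ℝ} {N : Matrix κ μ ℝ}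
    (hM : ∀ i k, 0 ≤ M i k) (hN : ∀ k j, 0 ≤ N k j) :
    ∑ i, ∑ j, (M * N) i j ≤ (∑ i, ∑ k, M i k) * ∑ k, ∑ j, N k j := by
  have col_le (k : κ) : ∑ i, M i k ≤ ∑ i, ∑ k, M i k :=
    (Finset.single_le_sum (fun k _ => Finset.sum_nonneg fun i _ => hM i k)
      (Finset.mem_univ k)).trans_eq Finset.sum_comm
  calc ∑ i, ∑ j, (M * N) i j = ∑ k, (∑ i, M i k) * ∑ j, N k j := by
        simp only [mul_apply, Finset.sum_mul_sum]
        exact (Finset.sum_congr rfl fun _ _ => Finset.sum_comm).trans Finset.sum_comm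
    _ ≤ ∑ k, (∑ i, ∑ k, M i k) * ∑ j, N k j :=
        Finset.sum_le_sum fun k _ =>
          mul_le_mul_of_nonneg_right (col_le k) (Finset.sum_nonneg fun j _ => hN k j)
    _ = (∑ i, ∑ k, M i k) * ∑ k, ∑ j, N k j := (Finset.mul_sum _ _ _).symm

theorem exists_sum_sum_le_card_mul_apply [Fintype ι] [Fintype κ] {M : Matrix ι κ ℝ}
    (hM : ∀ i k, 0 ≤ M i k) {p : ι → Prop} {q : κ → Prop} (hsupp : ∀ i k, M i k ≠ 0 → p i ∧ q k)
    (hp : ∃ i, p i) (hq : ∃ k, q k) :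
    ∃ i k, p i ∧ q k ∧ ∑ i, ∑ k, M i k ≤ Fintype.card ι * Fintype.card κ * M i k := by
  classical
  obtain ⟨⟨i, k⟩, hik, hmax⟩ := Finset.exists_max_image
    ((Finset.univ.filter p) ×ˢ (Finset.univ.filter q)) (fun x => M x.1 x.2)
    ((Finset.filter_nonempty_iff.mpr (by simpa using hp)).product
      (Finset.filter_nonempty_iff.mpr (by simpa using hq)))
  simp only [Finset.mem_product, Finset.mem_filter, Finset.mem_univ, true_and] at hik
  refine ⟨i, k, hik.1, hik.2, ?_⟩
  calc ∑ i, ∑ k, M i k ≤ ∑ _i : ι, ∑ _k : κ, M i k := by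
        refine Finset.sum_le_sum fun i' _ => Finset.sum_le_sum fun k' _ => ?_
        by_cases h : M i' k' = 0
        · exact h ▸ hM i k
        · exact hmax (i', k') (by simpa using hsupp i' k' h)
    _ = Fintype.card ι * Fintype.card κ * M i k := by simp [mul_assoc]

end Matrix

namespace GMPS

variable (G : GMPS)

@[simp] theorem Tp_nil : G.Tp [] = 1 := rfl

@[simp] theorem Tp_cons (e : G.E) (l : List G.E) : G.Tp (e :: l) = G.T e * G.Tp l := by
  simp [Tp]

@[simp] theorem Tp_append (l₁ l₂ : List G.E) : G.Tp (l₁ ++ l₂) = G.Tp l₁ * G.Tp l₂ := by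
  simp [Tp]

theorem Tp_nonneg (l : List G.E) : ∀ i j, 0 ≤ G.Tp l i j := by
  induction l with
  | nil => exact fun i j => Matrix.zero_le_one_elem i j
  | cons e l ih =>
    exact fun i j => Finset.sum_nonneg fun k _ => mul_nonneg (G.T_nonneg e i k) (ih k j)

theorem mnorm_Tp_nonneg (l : List G.E) : 0 ≤ G.mnorm (G.Tp l) :=
  Finset.sum_nonneg fun i _ => Finset.sum_nonneg fun j _ => G.Tp_nonneg l i j

theorem mnorm_Tp_append_le (l₁ l₂ : List G.E) :
    G.mnorm (G.Tp (l₁ ++ l₂)) ≤ G.mnorm (G.Tp l₁) * G.mnorm (G.Tp l₂) := by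
  rw [Tp_append]
  exact Matrix.sum_sum_mul_le (G.Tp_nonneg l₁) (G.Tp_nonneg l₂)

theorem mnorm_Tp_append_append_le (l₁ l₂ l₃ : List G.E) :
    G.mnorm (G.Tp (l₁ ++ l₂ ++ l₃)) ≤
      G.mnorm (G.Tp l₁) * G.mnorm (G.Tp l₂) * G.mnorm (G.Tp l₃) :=
  (G.mnorm_Tp_append_le _ _).trans <|
    mul_le_mul_of_nonneg_right (G.mnorm_Tp_append_le _ _) (G.mnorm_Tp_nonneg _)

theorem Tp_apply_mul_Tp_apply_mul_Tp_apply_le_mnorm (l₁ l₂ l₃ : List G.E) (i k l j : G.Idx) :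
    G.Tp l₁ i k * G.Tp l₂ k l * G.Tp l₃ l j ≤ G.mnorm (G.Tp (l₁ ++ l₂ ++ l₃)) :=
  calc G.Tp l₁ i k * G.Tp l₂ k l * G.Tp l₃ l j
      ≤ G.Tp l₁ i k * G.Tp (l₂ ++ l₃) k j := by
        rw [mul_assoc, Tp_append]
        exact mul_le_mul_of_nonneg_left
          (Matrix.apply_mul_apply_le_mul_apply (G.Tp_nonneg l₂) (G.Tp_nonneg l₃) k l j)
          (G.Tp_nonneg l₁ i k)
    _ ≤ G.Tp (l₁ ++ (l₂ ++ l₃)) i j := by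
        rw [Tp_append G l₁]
        exact Matrix.apply_mul_apply_le_mul_apply (G.Tp_nonneg l₁) (G.Tp_nonneg _) i k j
    _ ≤ G.mnorm (G.Tp (l₁ ++ l₂ ++ l₃)) := by
        rw [List.append_assoc]
        exact Matrix.apply_le_sum_sum (G.Tp_nonneg _) i j

theorem startsAt.row_fst_eq_of_Tp_ne_zero {G : GMPS} {l : List G.E} {v : G.V}
    (hv : G.startsAt l v) {i j : G.Idx} (h : G.Tp l i j ≠ 0) : i.1 = v := by
  obtain ⟨e, he, rfl⟩ := hv
  cases l with
  | nil => simp at he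
  | cons a l =>
    obtain rfl : a = e := by simpa using he
    rw [Tp_cons, Matrix.mul_apply] at h
    obtain ⟨k, -, hk⟩ := Finset.exists_ne_zero_of_sum_ne_zero h
    exact (G.T_block a i k (left_ne_zero_of_mul hk)).1

theorem endsAt.col_fst_eq_of_Tp_ne_zero {G : GMPS} {l : List G.E} {v : G.V}
    (hv : G.endsAt l v) {i j : G.Idx} (h : G.Tp l i j ≠ 0) : j.1 = v := by
  obtain ⟨e, he, rfl⟩ := hv
  obtain ⟨l, rfl⟩ := List.getLast?_eq_some_iff.mp he
  rw [Tp_append, Tp_cons, Tp_nil, mul_one, Matrix.mul_apply] at h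
  obtain ⟨k, -, hk⟩ := Finset.exists_ne_zero_of_sum_ne_zero h
  exact (G.T_block e k j (right_ne_zero_of_mul hk)).2

theorem exists_pathFrom {l : List G.E} (hl : G.IsPath l) (hne : l ≠ []) :
    ∃ v w, G.PathFrom l v w :=
  ⟨_, _, hl, ⟨l.head hne, List.head?_eq_some_head hne, rfl⟩,
    ⟨l.getLast hne, List.getLast?_eq_some_getLast hne, rfl⟩⟩

theorem isPath_append {l₁ l₂ : List G.E} {v : G.V} (h₁ : G.IsPath l₁) (h₂ : G.IsPath l₂)
    (hv₁ : G.endsAt l₁ v) (hv₂ : G.startsAt l₂ v) : G.IsPath (l₁ ++ l₂) := by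
  obtain ⟨e₁, he₁, rfl⟩ := hv₁
  obtain ⟨e₂, he₂, hv⟩ := hv₂
  refine List.isChain_append.mpr ⟨h₁, h₂, ?_⟩
  simp_all

theorem endsAt.append {G : GMPS} {l₂ : List G.E} {w : G.V} (h : G.endsAt l₂ w)
    (l₁ : List G.E) :
    G.endsAt (l₁ ++ l₂) w := by
  obtain ⟨e, he, rfl⟩ := h
  exact ⟨e, by simp [List.getLast?_append, he], rfl⟩

theorem PathFrom.block_of_Tp_ne_zero {G : GMPS} {l : List G.E} {v w : G.V}
    (hl : G.PathFrom l v w) (i j : G.Idx) (h : G.Tp l i j ≠ 0) : i.1 = v ∧ j.1 = w :=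
  ⟨hl.2.1.row_fst_eq_of_Tp_ne_zero h, hl.2.2.col_fst_eq_of_Tp_ne_zero h⟩

theorem PathFrom.exists_mnorm_Tp_le {G : GMPS} {l : List G.E} {v w : G.V}
    (hl : G.PathFrom l v w) :
    ∃ i j : G.Idx, i.1 = v ∧ j.1 = w ∧
      G.mnorm (G.Tp l) ≤ (Fintype.card G.Idx : ℝ) ^ 2 * G.Tp l i j := by
  simpa only [sq, mnorm] using Matrix.exists_sum_sum_le_card_mul_apply (G.Tp_nonneg l)
    hl.block_of_Tp_ne_zero ⟨⟨v, ⟨0, G.dim_pos v⟩⟩, rfl⟩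
    ⟨⟨w, ⟨0, G.dim_pos w⟩⟩, rfl⟩

theorem exists_pos_le_Tp_apply_of_pos (H : Finset (List G.E)) :
    ∃ c > 0, ∀ γ ∈ H, ∀ i j, 0 < G.Tp γ i j → c ≤ G.Tp γ i j := by
  have : ∀ᶠ c in 𝓝[>] (0 : ℝ), ∀ γ ∈ H, ∀ i j, 0 < G.Tp γ i j → c ≤ G.Tp γ i j := by
    simp only [eventually_all_finset, eventually_all]
    exact fun γ _ i j h => nhdsWithin_le_nhds (eventually_le_nhds h)
  exact (this.and self_mem_nhdsWithin).exists.imp fun c h => ⟨h.2, h.1⟩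

theorem exists_pos_mnorm_Tp_le (H : Finset (List G.E)) :
    ∃ B > 0, ∀ γ ∈ H, G.mnorm (G.Tp γ) ≤ B := by
  have : ∀ᶠ B in atTop, ∀ γ ∈ H, G.mnorm (G.Tp γ) ≤ B :=
    (eventually_all_finset H).2 fun γ _ => eventually_ge_atTop _
  exact (this.and (eventually_gt_atTop 0)).exists.imp fun B h => ⟨h.2, h.1⟩

theorem IrredFamily.exists_mem_connecting {G : GMPS} {H : Finset (List G.E)}
    (hH : G.IrredFamily H) {c : ℝ} (hc : 0 ≤ c)
    (hcH : ∀ γ ∈ H, ∀ i j, 0 < G.Tp γ i j → c ≤ G.Tp γ i j) {η₁ η₂ : List G.E}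
    (h₁ : G.IsPath η₁) (hne₁ : η₁ ≠ []) (h₂ : G.IsPath η₂)
    (hne₂ : η₂ ≠ []) :
    ∃ γ ∈ H, G.IsPath (η₁ ++ γ ++ η₂) ∧
      c * G.mnorm (G.Tp η₁) * G.mnorm (G.Tp η₂) ≤
        (Fintype.card G.Idx : ℝ) ^ 4 * G.mnorm (G.Tp (η₁ ++ γ ++ η₂)) := by
  obtain ⟨_, v, hη₁⟩ := G.exists_pathFrom h₁ hne₁
  obtain ⟨w, _, hη₂⟩ := G.exists_pathFrom h₂ hne₂
  obtain ⟨i, k, -, hk, hik⟩ := hη₁.exists_mnorm_Tp_le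
  obtain ⟨l, j, hl, -, hlj⟩ := hη₂.exists_mnorm_Tp_le
  obtain ⟨γ, hγH, hγ, hγpos⟩ := hH k.1 l.1 k.2 l.2
  refine ⟨γ, hγH, ?_, ?_⟩
  · exact G.isPath_append (G.isPath_append h₁ hγ.1 (hk ▸ hη₁.2.2) hγ.2.1) h₂
      (hγ.2.2.append η₁) (hl ▸ hη₂.2.1)
  set K : ℝ := (Fintype.card G.Idx : ℝ)
  have hprod : G.mnorm (G.Tp η₁) * G.mnorm (G.Tp η₂) ≤
      (K ^ 2 * G.Tp η₁ i k) * (K ^ 2 * G.Tp η₂ l j) :=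
    mul_le_mul hik hlj (G.mnorm_Tp_nonneg η₂) ((G.mnorm_Tp_nonneg η₁).trans hik)
  have hik₀ := G.Tp_nonneg η₁ i k
  have hlj₀ := G.Tp_nonneg η₂ l j
  calc c * G.mnorm (G.Tp η₁) * G.mnorm (G.Tp η₂)
      ≤ c * ((K ^ 2 * G.Tp η₁ i k) * (K ^ 2 * G.Tp η₂ l j)) := by
        rw [mul_assoc]
        exact mul_le_mul_of_nonneg_left hprod hc
    _ = K ^ 4 * (G.Tp η₁ i k * c * G.Tp η₂ l j) := by ring
    _ ≤ K ^ 4 * (G.Tp η₁ i k * G.Tp γ k l * G.Tp η₂ l j) := by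
        gcongr
        exact hcH γ hγH k l hγpos
    _ ≤ K ^ 4 * G.mnorm (G.Tp (η₁ ++ γ ++ η₂)) := by
        gcongr
        exact G.Tp_apply_mul_Tp_apply_mul_Tp_apply_le_mnorm η₁ γ η₂ i k l j

end GMPS

theorem gmps_irred_connecting_estimate_general (G : GMPS)
    (H : Finset (List G.E)) (hH : G.IrredFamily H) :
    ∃ A B : ℝ, 0 < A ∧ 0 < B ∧
      ∀ η₁ η₂ : List G.E, G.IsPath η₁ → η₁ ≠ [] → G.IsPath η₂ → η₂ ≠ [] →
        ∃ γ ∈ H, G.IsPath (η₁ ++ γ ++ η₂) ∧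
          A * G.mnorm (G.Tp η₁) * G.mnorm (G.Tp η₂) ≤ G.mnorm (G.Tp (η₁ ++ γ ++ η₂)) ∧
          G.mnorm (G.Tp (η₁ ++ γ ++ η₂)) ≤ B * G.mnorm (G.Tp η₁) * G.mnorm (G.Tp η₂) := by
  obtain ⟨c, hc, hcH⟩ := G.exists_pos_le_Tp_apply_of_pos H
  obtain ⟨B, hB, hBH⟩ := G.exists_pos_mnorm_Tp_le H
  set K : ℝ := (Fintype.card G.Idx : ℝ)
  -- the `+ 1` keeps `A` positive also when `G.Idx` is empty
  refine ⟨c / (K ^ 4 + 1), B, by positivity, hB, fun η₁ η₂ h₁ hne₁ h₂ hne₂ => ?_⟩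
  obtain ⟨γ, hγH, hpath, hlow⟩ := hH.exists_mem_connecting hc.le hcH h₁ hne₁ h₂ hne₂
  have hn := G.mnorm_Tp_nonneg
  refine ⟨γ, hγH, hpath, ?_, ?_⟩
  · calc c / (K ^ 4 + 1) * G.mnorm (G.Tp η₁) * G.mnorm (G.Tp η₂)
        = c * G.mnorm (G.Tp η₁) * G.mnorm (G.Tp η₂) / (K ^ 4 + 1) := by ring
      _ ≤ K ^ 4 * G.mnorm (G.Tp (η₁ ++ γ ++ η₂)) / (K ^ 4 + 1) := by gcongr
      _ ≤ G.mnorm (G.Tp (η₁ ++ γ ++ η₂)) := by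
          rw [div_le_iff₀ (by positivity)]
          nlinarith [hn (η₁ ++ γ ++ η₂)]
  · calc G.mnorm (G.Tp (η₁ ++ γ ++ η₂))
        ≤ G.mnorm (G.Tp η₁) * G.mnorm (G.Tp γ) * G.mnorm (G.Tp η₂) :=
          G.mnorm_Tp_append_append_le η₁ γ η₂
      _ ≤ G.mnorm (G.Tp η₁) * B * G.mnorm (G.Tp η₂) :=
          mul_le_mul_of_nonneg_right (mul_le_mul_of_nonneg_left (hBH γ hγH) (hn η₁)) (hn η₂)
      _ = B * G.mnorm (G.Tp η₁) * G.mnorm (G.Tp η₂) := by ring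

/-- **Irreducibility estimate.** In an irreducible matrix product system with
irreducibility family `H`, there are constants `A, B > 0` such that any two paths
`η₁, η₂` can be connected by some `γ ∈ H` with
`A ‖T(η₁)‖ ‖T(η₂)‖ ≤ ‖T(η₁γη₂)‖ ≤ B ‖T(η₁)‖ ‖T(η₂)‖`. -/
theorem gmps_irred_connecting_estimate (G : GMPS) (hsc : G.StronglyConnected)
    (H : Finset (List G.E)) (hH : G.IrredFamily H) :
    ∃ A B : ℝ, 0 < A ∧ 0 < B ∧
      ∀ η₁ η₂ : List G.E, G.IsPath η₁ → η₁ ≠ [] → G.IsPath η₂ → η₂ ≠ [] →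
        ∃ γ ∈ H, G.IsPath (η₁ ++ γ ++ η₂) ∧
          A * G.mnorm (G.Tp η₁) * G.mnorm (G.Tp η₂) ≤ G.mnorm (G.Tp (η₁ ++ γ ++ η₂)) ∧
          G.mnorm (G.Tp (η₁ ++ γ ++ η₂)) ≤ B * G.mnorm (G.Tp η₁) * G.mnorm (G.Tp η₂) :=
  gmps_irred_connecting_estimate_general G H hH
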